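/- Let S and A be nonempty finite types, p : S → A → PMF S, r : S → A → ℝ, γ ∈ [0,1), and V* the unique fixed point of the Bellman optimality operator T. Let π* : S → A be any greedy policy with respect to V*, i.e., for every s ∈ S, π*(s) attains the maximum of a ↦ r(s,a) + γ · ∑_{s'} p(s'∣s,a) · V*(s'). Then V^{π*} = V*; in particular there exists a stationary deterministic policy whose value function equals the optimal value function. -/

import Mathlib

/-- The Bellman optimality operator of a finite MDP. -/
noncomputable def bellmanOpt {S A : Type*} [Fintype S] [Fintype A] [Nonempty A]
    (p : S → A → PMF S) (r : S → A → ℝ) (γ : ℝ) (V : S → ℝ) : S → ℝ :=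
  fun s => Finset.univ.sup' Finset.univ_nonempty
    (fun a : A => r s a + γ * ∑ s' : S, (p s a s').toReal * V s')

/-- The policy evaluation operator for a stationary deterministic policy `π`. -/
noncomputable def polEval {S A : Type*} [Fintype S]
    (p : S → A → PMF S) (r : S → A → ℝ) (γ : ℝ) (π : S → A) (V : S → ℝ) : S → ℝ :=
  fun s => r s (π s) + γ * ∑ s' : S, (p s (π s) s').toReal * V s'

/-!
For a fixed policy `π`, the evaluation operator `T^π` is affine with a stochastic linear part scaled
by `γ`, hence a `γ`-contraction in the sup metric; for `0 ≤ γ < 1` it has at most one fixed point.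
A policy greedy for `V*` makes `T^π V* = T V* = V*`, so `V*` is that fixed point and `V^π = V*`.
-/

open Finset

namespace PMF

variable {α : Type*} [Fintype α]

theorem sum_toReal_eq_one (q : PMF α) : ∑ a, (q a).toReal = 1 := by
  rw [← ENNReal.toReal_sum fun a _ => q.apply_ne_top a,
    ← tsum_fintype (L := SummationFilter.unconditional _), q.tsum_coe, ENNReal.toReal_one]

theorem abs_sum_toReal_mul_le_norm (q : PMF α) (f : α → ℝ) :
    |∑ a, (q a).toReal * f a| ≤ ‖f‖ :=
  calc |∑ a, (q a).toReal * f a|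
      ≤ ∑ a, (q a).toReal * |f a| := by
        refine (abs_sum_le_sum_abs _ _).trans_eq (sum_congr rfl fun a _ => ?_)
        rw [abs_mul, abs_of_nonneg ENNReal.toReal_nonneg]
    _ ≤ ∑ a, (q a).toReal * ‖f‖ :=
        sum_le_sum fun a _ => mul_le_mul_of_nonneg_left (norm_le_pi_norm f a) ENNReal.toReal_nonneg
    _ = ‖f‖ := by rw [← sum_mul, q.sum_toReal_eq_one, one_mul]

end PMF

section PolicyEvaluation

variable {S A : Type*} [Fintype S] (p : S → A → PMF S) (r : S → A → ℝ) {γ : ℝ}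

theorem polEval_sub_polEval (π : S → A) (V W : S → ℝ) (s : S) :
    polEval p r γ π V s - polEval p r γ π W s
      = γ * ∑ s', (p s (π s) s').toReal * (V - W) s' := by
  simp only [polEval, Pi.sub_apply, mul_sub, sum_sub_distrib]
  ring

theorem dist_polEval_le (hγ0 : 0 ≤ γ) (π : S → A) (V W : S → ℝ) :
    dist (polEval p r γ π V) (polEval p r γ π W) ≤ γ * dist V W := by
  refine (dist_pi_le_iff (by positivity)).2 fun s => ?_
  rw [Real.dist_eq, polEval_sub_polEval, abs_mul, abs_of_nonneg hγ0, dist_eq_norm]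
  exact mul_le_mul_of_nonneg_left ((p s (π s)).abs_sum_toReal_mul_le_norm _) hγ0

theorem polEval_fixedPoint_unique (hγ0 : 0 ≤ γ) (hγ1 : γ < 1) {π : S → A} {V W : S → ℝ}
    (hV : polEval p r γ π V = V) (hW : polEval p r γ π W = W) : V = W := by
  have hdist : dist V W ≤ γ * dist V W := by
    simpa only [hV, hW] using dist_polEval_le p r hγ0 π V W
  exact dist_le_zero.1 (by nlinarith [dist_nonneg (x := V) (y := W)])

theorem bellmanOpt_eq_polEval_of_greedy [Fintype A] [Nonempty A] {π : S → A} {V : S → ℝ}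
    (hgreedy : ∀ s, ∀ a : A,
      r s a + γ * ∑ s' : S, (p s a s').toReal * V s' ≤
        r s (π s) + γ * ∑ s' : S, (p s (π s) s').toReal * V s') :
    bellmanOpt p r γ V = polEval p r γ π V :=
  funext fun s => le_antisymm (sup'_le _ _ fun a _ => hgreedy s a)
    (le_sup' (fun a => r s a + γ * ∑ s', (p s a s').toReal * V s') (mem_univ (π s)))

end PolicyEvaluation

theorem greedy_policy_is_optimal_general {S A : Type*} [Fintype S] [Fintype A]
    [Nonempty A]
    (p : S → A → PMF S) (r : S → A → ℝ) (γ : ℝ) (hγ0 : 0 ≤ γ) (hγ1 : γ < 1)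
    (Vstar : S → ℝ) (hVstar : bellmanOpt p r γ Vstar = Vstar)
    (π : S → A)
    (hgreedy : ∀ s, ∀ a : A,
      r s a + γ * ∑ s' : S, (p s a s').toReal * Vstar s' ≤
        r s (π s) + γ * ∑ s' : S, (p s (π s) s').toReal * Vstar s')
    (Vπ : S → ℝ) (hVπ : polEval p r γ π Vπ = Vπ) :
    Vπ = Vstar := by
  have hVstar_fixed : polEval p r γ π Vstar = Vstar := by
    rw [← bellmanOpt_eq_polEval_of_greedy p r hgreedy, hVstar]
  exact polEval_fixedPoint_unique p r hγ0 hγ1 hVπ hVstar_fixed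

/-- Any policy that is greedy with respect to the optimal value function `V*`
has value function equal to `V*`; in particular some stationary deterministic
policy is optimal. -/
theorem greedy_policy_is_optimal {S A : Type*} [Fintype S] [Fintype A]
    [Nonempty S] [Nonempty A]
    (p : S → A → PMF S) (r : S → A → ℝ) (γ : ℝ) (hγ0 : 0 ≤ γ) (hγ1 : γ < 1)
    (Vstar : S → ℝ) (hVstar : bellmanOpt p r γ Vstar = Vstar)
    (π : S → A)
    (hgreedy : ∀ s, ∀ a : A,
      r s a + γ * ∑ s' : S, (p s a s').toReal * Vstar s' ≤
        r s (π s) + γ * ∑ s' : S, (p s (π s) s').toReal * Vstar s')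
    (Vπ : S → ℝ) (hVπ : polEval p r γ π Vπ = Vπ) :
    Vπ = Vstar :=
  greedy_policy_is_optimal_general p r γ hγ0 hγ1 Vstar hVstar π hgreedy Vπ hVπ
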